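/- For every positive integer n, S_n = ((n+1)/(2n)) * S_{n-1} + 1, where S_n = Σ_{k=0}^{n} 1/C(n,k). -/

import Mathlib

/-!
Pascal's rule for reciprocals: `1/C(m+1,k) + 1/C(m+1,k+1) = (m+2)/(m+1) · 1/C(m,k)`, because
`C(m+1,k) = (m+1)/(m+1-k) · C(m,k)` and `C(m+1,k+1) = (m+1)/(k+1) · C(m,k)`. Summing over
`k ≤ m`, every reciprocal of row `m+1` occurs twice except the two end terms `1`, so
`(m+2)/(m+1) · S_m = 2 S_{m+1} - 2`.
-/

open Finset

section InvChoose

variable {K : Type*} [Field K] [CharZero K]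

theorem inv_choose_add_inv_choose_succ {m k : ℕ} (hk : k ≤ m) :
    ((m + 1).choose k : K)⁻¹ + ((m + 1).choose (k + 1) : K)⁻¹ =
      (m + 2) / (m + 1) * (m.choose k : K)⁻¹ := by
  have h_succ : ((m + 1 : ℕ) * m.choose k : K) = (m + 1).choose (k + 1) * (k + 1 : ℕ) := by
    exact_mod_cast Nat.add_one_mul_choose_eq m k
  have h_same : (m.choose k * (m + 1 : ℕ) : K) = (m + 1).choose k * (m + 1 - k : ℕ) := by
    exact_mod_cast Nat.choose_mul_succ_eq m k
  have hm : (m.choose k : K) ≠ 0 := by exact_mod_cast (Nat.choose_pos hk).ne'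
  have ha : ((m + 1).choose k : K) ≠ 0 := by exact_mod_cast (Nat.choose_pos (by omega)).ne'
  have hb : ((m + 1).choose (k + 1) : K) ≠ 0 := by exact_mod_cast (Nat.choose_pos (by omega)).ne'
  rw [Nat.cast_sub (by omega)] at h_same
  push_cast at h_succ h_same
  field_simp
  linear_combination (↑((m + 1).choose k) : K) * h_succ + (↑((m + 1).choose (k + 1)) : K) * h_same

def invChooseSum (n : ℕ) : K :=
  ∑ k ∈ range (n + 1), (n.choose k : K)⁻¹

theorem add_two_div_mul_invChooseSum (m : ℕ) :
    (m + 2) / (m + 1) * invChooseSum (K := K) m = 2 * invChooseSum (m + 1) - 2 := by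
  have h_pairs : (m + 2) / (m + 1) * invChooseSum (K := K) m =
      ∑ k ∈ range (m + 1), (((m + 1).choose k : K)⁻¹ + ((m + 1).choose (k + 1) : K)⁻¹) := by
    rw [invChooseSum, mul_sum]
    refine sum_congr rfl fun k hk ↦ ?_
    exact (inv_choose_add_inv_choose_succ (mem_range_succ_iff.mp hk)).symm
  have h_drop_last : invChooseSum (K := K) (m + 1) =
      ∑ k ∈ range (m + 1), ((m + 1).choose k : K)⁻¹ + 1 := by
    simp [invChooseSum, sum_range_succ _ (m + 1)]
  have h_drop_first : invChooseSum (K := K) (m + 1) =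
      ∑ k ∈ range (m + 1), ((m + 1).choose (k + 1) : K)⁻¹ + 1 := by
    simp [invChooseSum, sum_range_succ' _ (m + 1)]
  rw [h_pairs, sum_add_distrib]
  linear_combination -h_drop_last - h_drop_first

theorem invChooseSum_succ (m : ℕ) :
    invChooseSum (K := K) (m + 1) = (m + 2) / (2 * (m + 1)) * invChooseSum m + 1 := by
  rw [div_mul_eq_div_div_swap, div_mul_eq_mul_div, add_two_div_mul_invChooseSum]
  ring

end InvChoose

theorem stmt_2 (n : ℕ) (hn : 0 < n)
    (S : ℕ → ℝ) (hS : ∀ m, S m = ∑ k ∈ Finset.range (m + 1), (1 : ℝ) / m.choose k) :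
    S n = ((n + 1 : ℝ) / (2 * n)) * S (n - 1) + 1 := by
  obtain ⟨m, rfl⟩ : ∃ m, n = m + 1 := ⟨n - 1, by omega⟩
  obtain rfl : S = invChooseSum := funext fun m ↦ by simp only [hS, invChooseSum, one_div]
  rw [invChooseSum_succ, Nat.add_sub_cancel]
  push_cast
  ring
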